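/- Given a real polynomial p, there exists an integer d ≥ deg(p) such that the Bernstein coefficients satisfy 0 ≤ β_{k,d}(p) ≤ 1 for all 0 ≤ k ≤ d, if and only if either (i) p ≡ 0, or (ii) p ≡ 1, or (iii) 0 ≤ p(0) ≤ 1, 0 ≤ p(1) ≤ 1, and 0 < p(x) < 1 for all x ∈ (0,1). -/

import Mathlib

/-!
On `[0, 1]` the Bernstein polynomials `b_{k,d}` are nonnegative, positive inside, and sum to `1`.
So coefficients in `[0, 1]` give `0 ≤ p ≤ 1` on `[0, 1]`, strictly inside unless all coefficients
are `0` or all are `1`.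

Conversely, expanding each monomial shows that the degree-`d` coefficients of `p` are
`∑ⱼ aⱼ C(k,j) / C(d,j)`, which differ from `p (k / d)` by `O(1 / d)`. They are therefore
nonnegative for large `d` when `p > 0` on `[0, 1]`. Roots at `0` or `1` can be divided off,
because multiplying by `X` or by `1 - X` keeps the coefficients nonnegative. Applying this to
`p` and to `1 - p` at a common degree, uniqueness of the coefficients shows that the two
coefficient sequences add up to `1`, so both lie in `[0, 1]`.
-/

open Finset Polynomial

theorem pow_card_sub_prod_le {ι R : Type*} [CommRing R] [LinearOrder R] [IsStrictOrderedRing R]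
    (s : Finset ι) {t : ι → R} {a ε : R} (ha : a ≤ 1) (ht : ∀ i ∈ s, 0 ≤ t i ∧ t i ≤ a)
    (hε : ∀ i ∈ s, a - t i ≤ ε) : a ^ #s - ∏ i ∈ s, t i ≤ #s * ε := by
  induction s using Finset.cons_induction with
  | empty => simp
  | cons i s hi ih =>
    simp only [forall_mem_cons] at ht hε
    obtain ⟨⟨hti0, htia⟩, ht⟩ := ht
    have hprod : ∏ j ∈ s, t j ≤ a ^ #s := by
      simpa using prod_le_prod (fun j hj => (ht j hj).1) (fun j hj => (ht j hj).2)
    have hpow : a ^ #s ≤ 1 := pow_le_one₀ (hti0.trans htia) ha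
    rw [prod_cons, card_cons, pow_succ, Nat.cast_succ]
    calc a ^ #s * a - t i * ∏ j ∈ s, t j
        = a ^ #s * (a - t i) + t i * (a ^ #s - ∏ j ∈ s, t j) := by ring
      _ ≤ 1 * ε + 1 * (#s * ε) :=
        add_le_add (mul_le_mul hpow hε.1 (sub_nonneg.2 htia) zero_le_one)
          (mul_le_mul (htia.trans ha) (ih ht hε.2) (sub_nonneg.2 hprod) zero_le_one)
      _ = (#s + 1) * ε := by ring

theorem Nat.cast_choose_div_cast_choose_eq_prod {K : Type*} [Field K] [CharZero K] (d j k : ℕ) :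
    (k.choose j : K) / d.choose j = ∏ i ∈ range j, ((k : K) - i) / (d - i) := by
  rw [cast_choose_eq_descPochhammer_div, cast_choose_eq_descPochhammer_div,
    div_div_div_cancel_right₀ (cast_ne_zero.2 j.factorial_ne_zero), prod_div_distrib,
    descPochhammer_eval_eq_prod_range, descPochhammer_eval_eq_prod_range]

theorem abs_choose_div_choose_sub_pow_le {d j k : ℕ} (hjd : j < d) (hkd : k ≤ d) :
    |(k.choose j : ℝ) / d.choose j - ((k : ℝ) / d) ^ j| ≤ j ^ 2 / (d - j) := by
  have hd : (0 : ℝ) < d := by exact_mod_cast (Nat.zero_le j).trans_lt hjd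
  have hdj : (0 : ℝ) < d - j := sub_pos.2 (by exact_mod_cast hjd)
  have hkd' : (k : ℝ) ≤ d := by exact_mod_cast hkd
  have ha : (k : ℝ) / d ≤ 1 := div_le_one_of_le₀ hkd' hd.le
  rcases lt_or_ge k j with hkj | hjk
  · have hkj' : (k : ℝ) + 1 ≤ j := by exact_mod_cast hkj
    rw [Nat.choose_eq_zero_of_lt hkj, Nat.cast_zero, zero_div, zero_sub, abs_neg,
      abs_of_nonneg (by positivity)]
    calc ((k : ℝ) / d) ^ j ≤ k / d := pow_le_of_le_one (by positivity) ha (by omega)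
      _ ≤ j / d := by gcongr
      _ ≤ j / (d - j) := by gcongr; exact sub_le_self _ (Nat.cast_nonneg j)
      _ ≤ j ^ 2 / (d - j) := by gcongr; exact le_self_pow₀ (by linarith) two_ne_zero
  have hjk' : (j : ℝ) ≤ k := by exact_mod_cast hjk
  have hfactor (i : ℕ) (hi : i ∈ range j) : (0 ≤ ((k : ℝ) - i) / (d - i) ∧
      ((k : ℝ) - i) / (d - i) ≤ k / d) ∧ (k : ℝ) / d - ((k : ℝ) - i) / (d - i) ≤ j / (d - j) := by
    have hij : (i : ℝ) + 1 ≤ j := by exact_mod_cast mem_range.1 hi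
    have hdi : (0 : ℝ) < d - i := by linarith
    refine ⟨⟨div_nonneg (by linarith) hdi.le, ?_⟩, ?_⟩
    · rw [div_le_div_iff₀ hdi hd]
      nlinarith
    · -- `k / d - (k - i) / (d - i) = i (d - k) / (d (d - i))`
      have : (i : ℝ) * (d - k) * (d - j) ≤ j * d * (d - i) :=
        mul_le_mul (mul_le_mul (by linarith) (by linarith) (by linarith) (by positivity))
          (by linarith) hdj.le (by positivity)
      rw [div_sub_div _ _ hd.ne' hdi.ne', div_le_div_iff₀ (mul_pos hd hdi) hdj]
      linarith
  rw [Nat.cast_choose_div_cast_choose_eq_prod, abs_sub_comm, abs_of_nonneg]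
  · simpa [sq, mul_div_assoc] using pow_card_sub_prod_le (range j) ha
      (fun i hi => (hfactor i hi).1) (fun i hi => (hfactor i hi).2)
  · refine sub_nonneg.2 ((prod_le_prod (fun i hi => (hfactor i hi).1.1)
      fun i hi => (hfactor i hi).1.2).trans_eq ?_)
    rw [prod_const, card_range]

namespace bernsteinPolynomial

section CommRing

variable {R : Type*} [CommRing R]

theorem natCast_mul_X_mul (n ν : ℕ) :
    ((n + 1 : ℕ) : R[X]) * (X * bernsteinPolynomial R n ν) =
      ((ν + 1 : ℕ) : R[X]) * bernsteinPolynomial R (n + 1) (ν + 1) := by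
  have h := congrArg (Nat.cast : ℕ → R[X]) (Nat.add_one_mul_choose_eq n ν)
  push_cast at h ⊢
  simp only [bernsteinPolynomial, Nat.add_sub_add_right]
  linear_combination (X ^ (ν + 1) * (1 - X) ^ (n - ν)) * h

theorem natCast_mul_one_sub_X_mul (n ν : ℕ) :
    ((n + 1 : ℕ) : R[X]) * ((1 - X) * bernsteinPolynomial R n ν) =
      ((n + 1 - ν : ℕ) : R[X]) * bernsteinPolynomial R (n + 1) ν := by
  rcases lt_or_ge n ν with hnν | hνn
  · simp [eq_zero_of_lt R hnν, Nat.sub_eq_zero_of_le hnν]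
  have h := congrArg (Nat.cast : ℕ → R[X]) (Nat.choose_mul_succ_eq n ν)
  rw [Nat.sub_add_comm hνn] at h ⊢
  push_cast at h ⊢
  simp only [bernsteinPolynomial, Nat.sub_add_comm hνn, pow_succ]
  linear_combination (X ^ ν * (1 - X) ^ (n - ν) * (1 - X)) * h

theorem sum_choose_mul (n j : ℕ) :
    ∑ ν ∈ range (n + 1), (ν.choose j : R[X]) * bernsteinPolynomial R n ν =
      (n.choose j : R[X]) * X ^ j := by
  rcases lt_or_ge n j with hnj | hjn
  · rw [Nat.choose_eq_zero_of_lt hnj, Nat.cast_zero, zero_mul]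
    refine sum_eq_zero fun ν hν => ?_
    rw [Nat.choose_eq_zero_of_lt (by grind), Nat.cast_zero, zero_mul]
  have hterm (i : ℕ) :
      ((j + i).choose j : R[X]) * bernsteinPolynomial R n (j + i) =
        (n.choose j : R[X]) * X ^ j * bernsteinPolynomial R (n - j) i := by
    have h := congrArg (Nat.cast : ℕ → R[X])
      (Nat.choose_mul (n := n) (k := j + i) (s := j) (Nat.le_add_right j i))
    rw [Nat.add_sub_cancel_left] at h
    push_cast at h
    simp only [bernsteinPolynomial, pow_add, ← Nat.sub_sub]
    linear_combination (X ^ j * X ^ i * (1 - X) ^ (n - j - i)) * h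
  have hlow : ∀ ν ∈ range j, (ν.choose j : R[X]) * bernsteinPolynomial R n ν = 0 := fun ν hν => by
    rw [Nat.choose_eq_zero_of_lt (mem_range.1 hν), Nat.cast_zero, zero_mul]
  rw [show n + 1 = j + (n - j + 1) by omega, sum_range_add, sum_eq_zero hlow, zero_add,
    sum_congr rfl fun i _ => hterm i, ← mul_sum, sum, mul_one]

theorem eq_zero_of_sum_C_mul_eq_zero [NoZeroDivisors R] [CharZero R] {n : ℕ} {c : ℕ → R}
    (h : ∑ ν ∈ range (n + 1), C (c ν) * bernsteinPolynomial R n ν = 0) :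
    ∀ ν ≤ n, c ν = 0 := by
  intro ν
  induction ν using Nat.strong_induction_on with
  | _ ν ih =>
    intro hν
    have hder := congrArg (fun q => (derivative^[ν] q).eval 0) h
    simp only [iterate_derivative_sum, iterate_derivative_C_mul, eval_finsetSum, eval_mul,
      eval_C, iterate_derivative_zero, eval_zero] at hder
    rw [sum_eq_single ν (fun μ _ hμν => ?_) (by grind)] at hder
    · exact (mul_eq_zero.1 hder).resolve_right (iterate_derivative_at_0_ne_zero R n ν hν)
    rcases lt_or_gt_of_ne hμν with hlt | hgt
    · rw [ih μ hlt (by omega), zero_mul]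
    · rw [iterate_derivative_at_0_eq_zero_of_lt R n hgt, mul_zero]

end CommRing

section Field

variable {K : Type*} [Field K] [CharZero K]

theorem X_mul_eq_C_mul (n ν : ℕ) :
    X * bernsteinPolynomial K n ν =
      C (((ν + 1 : ℕ) : K) / (n + 1 : ℕ)) * bernsteinPolynomial K (n + 1) (ν + 1) := by
  have hn : ((n + 1 : ℕ) : K) ≠ 0 := Nat.cast_ne_zero.2 n.succ_ne_zero
  rw [div_eq_inv_mul, C_mul, mul_assoc, map_natCast, ← natCast_mul_X_mul, ← mul_assoc,
    ← map_natCast C, ← C_mul, inv_mul_cancel₀ hn, C_1, one_mul]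

theorem one_sub_X_mul_eq_C_mul (n ν : ℕ) :
    (1 - X) * bernsteinPolynomial K n ν =
      C (((n + 1 - ν : ℕ) : K) / (n + 1 : ℕ)) * bernsteinPolynomial K (n + 1) ν := by
  have hn : ((n + 1 : ℕ) : K) ≠ 0 := Nat.cast_ne_zero.2 n.succ_ne_zero
  rw [div_eq_inv_mul, C_mul, mul_assoc, map_natCast, ← natCast_mul_one_sub_X_mul, ← mul_assoc,
    ← map_natCast C, ← C_mul, inv_mul_cancel₀ hn, C_1, one_mul]

theorem X_pow_eq_sum_C_mul {n j : ℕ} (hj : j ≤ n) :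
    X ^ j = ∑ ν ∈ range (n + 1), C ((ν.choose j : K) / n.choose j) * bernsteinPolynomial K n ν := by
  have hc : (n.choose j : K) ≠ 0 := Nat.cast_ne_zero.2 (Nat.choose_pos hj).ne'
  simp_rw [div_eq_inv_mul, C_mul, mul_assoc, ← mul_sum, map_natCast, sum_choose_mul,
    ← mul_assoc, ← map_natCast C, ← C_mul, inv_mul_cancel₀ hc, C_1, one_mul]

end Field

section Order

variable {R : Type*} [CommRing R] [LinearOrder R] [IsStrictOrderedRing R]

theorem eval_nonneg (n ν : ℕ) {x : R} (hx : x ∈ Set.Icc 0 1) :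
    0 ≤ (bernsteinPolynomial R n ν).eval x := by
  obtain ⟨hx0, hx1⟩ := hx
  have : 0 ≤ 1 - x := sub_nonneg.2 hx1
  simp only [bernsteinPolynomial, eval_mul, eval_natCast, eval_pow, eval_X, eval_sub, eval_one]
  positivity

theorem eval_pos {n ν : ℕ} (hν : ν ≤ n) {x : R} (hx : x ∈ Set.Ioo 0 1) :
    0 < (bernsteinPolynomial R n ν).eval x := by
  obtain ⟨hx0, hx1⟩ := hx
  have : 0 < 1 - x := sub_pos.2 hx1
  have : (0 : R) < n.choose ν := Nat.cast_pos.2 (Nat.choose_pos hν)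
  simp only [bernsteinPolynomial, eval_mul, eval_natCast, eval_pow, eval_X, eval_sub, eval_one]
  positivity

end Order

end bernsteinPolynomial

noncomputable def bernsteinCoeff {K : Type*} [Field K] (p : K[X]) (d k : ℕ) : K :=
  ∑ j ∈ range (p.natDegree + 1), p.coeff j * (k.choose j / d.choose j)

theorem sum_C_bernsteinCoeff_mul {K : Type*} [Field K] [CharZero K] {p : K[X]} {d : ℕ}
    (hd : p.natDegree ≤ d) :
    ∑ k ∈ range (d + 1), C (bernsteinCoeff p d k) * bernsteinPolynomial K d k = p := by
  symm
  calc p = ∑ j ∈ range (p.natDegree + 1), C (p.coeff j) * X ^ j := as_sum_range_C_mul_X_pow p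
    _ = ∑ j ∈ range (p.natDegree + 1), C (p.coeff j) * ∑ k ∈ range (d + 1),
          C ((k.choose j : K) / d.choose j) * bernsteinPolynomial K d k :=
      sum_congr rfl fun j hj => by rw [bernsteinPolynomial.X_pow_eq_sum_C_mul (by grind : j ≤ d)]
    _ = _ := by
      simp only [bernsteinCoeff, map_sum, sum_mul, mul_sum, ← mul_assoc, ← C_mul]
      exact sum_comm

theorem abs_bernsteinCoeff_sub_eval_le {p : ℝ[X]} {d k : ℕ} (hd : p.natDegree < d) (hk : k ≤ d) :
    |bernsteinCoeff p d k - p.eval ((k : ℝ) / d)| ≤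
      (∑ j ∈ range (p.natDegree + 1), |p.coeff j| * j ^ 2) / (d - p.natDegree) := by
  have hdn : (0 : ℝ) < d - p.natDegree := sub_pos.2 (by exact_mod_cast hd)
  rw [bernsteinCoeff, eval_eq_sum_range, ← sum_sub_distrib, sum_div]
  refine (abs_sum_le_sum_abs _ _).trans (sum_le_sum fun j hj => ?_)
  have hjn : j ≤ p.natDegree := Nat.lt_succ_iff.1 (mem_range.1 hj)
  rw [← mul_sub, abs_mul, mul_div_assoc]
  refine mul_le_mul_of_nonneg_left ?_ (abs_nonneg _)
  calc _ ≤ (j : ℝ) ^ 2 / (d - j) := abs_choose_div_choose_sub_pow_le (by omega) hk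
    _ ≤ (j : ℝ) ^ 2 / (d - p.natDegree) := by gcongr

def HasNonnegBernsteinCoeffs (d : ℕ) (p : ℝ[X]) : Prop :=
  ∃ β : ℕ → ℝ, (∀ k ≤ d, 0 ≤ β k) ∧ p = ∑ k ∈ range (d + 1), C (β k) * bernsteinPolynomial ℝ d k

theorem hasNonnegBernsteinCoeffs_one_sub {d : ℕ} {β : ℕ → ℝ} (hβ : ∀ k ≤ d, β k ≤ 1) :
    HasNonnegBernsteinCoeffs d (1 - ∑ k ∈ range (d + 1), C (β k) * bernsteinPolynomial ℝ d k) :=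
  ⟨fun k => 1 - β k, fun k hk => sub_nonneg.2 (hβ k hk), by
    simp only [C_sub, C_1, sub_mul, one_mul, sum_sub_distrib, bernsteinPolynomial.sum]⟩

namespace HasNonnegBernsteinCoeffs

variable {d : ℕ} {p q : ℝ[X]}

theorem add (hp : HasNonnegBernsteinCoeffs d p) (hq : HasNonnegBernsteinCoeffs d q) :
    HasNonnegBernsteinCoeffs d (p + q) := by
  obtain ⟨β, hβ, rfl⟩ := hp
  obtain ⟨γ, hγ, rfl⟩ := hq
  exact ⟨β + γ, fun k hk => add_nonneg (hβ k hk) (hγ k hk), by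
    simp only [Pi.add_apply, C_add, add_mul, sum_add_distrib]⟩

theorem X_mul (hp : HasNonnegBernsteinCoeffs d p) : HasNonnegBernsteinCoeffs (d + 1) (X * p) := by
  obtain ⟨β, hβ, rfl⟩ := hp
  refine ⟨fun k => k / (d + 1 : ℕ) * β (k - 1), fun k hk => ?_, ?_⟩
  · rcases k with _ | k
    · simp
    · exact mul_nonneg (by positivity) (hβ k (by omega))
  · simp only [sum_range_succ' _ (d + 1), Nat.cast_zero, zero_div, zero_mul, C_0, add_zero,
      mul_sum]
    refine sum_congr rfl fun k _ => ?_
    rw [mul_left_comm, bernsteinPolynomial.X_mul_eq_C_mul, ← mul_assoc, ← C_mul,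
      Nat.add_sub_cancel, mul_comm (β k)]

theorem one_sub_X_mul (hp : HasNonnegBernsteinCoeffs d p) :
    HasNonnegBernsteinCoeffs (d + 1) ((1 - X) * p) := by
  obtain ⟨β, hβ, rfl⟩ := hp
  refine ⟨fun k => (d + 1 - k : ℕ) / (d + 1 : ℕ) * β k, fun k hk => ?_, ?_⟩
  · rcases hk.lt_or_eq with hk | rfl
    · exact mul_nonneg (by positivity) (hβ k (by omega))
    · simp
  · simp only [sum_range_succ _ (d + 1), Nat.sub_self, Nat.cast_zero, zero_div, zero_mul, C_0,
      add_zero, mul_sum]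
    refine sum_congr rfl fun k _ => ?_
    rw [mul_left_comm, bernsteinPolynomial.one_sub_X_mul_eq_C_mul, ← mul_assoc, ← C_mul,
      mul_comm (β k)]

theorem mono (hp : HasNonnegBernsteinCoeffs d p) {e : ℕ} (hde : d ≤ e) :
    HasNonnegBernsteinCoeffs e p := by
  induction e, hde using Nat.le_induction with
  | base => exact hp
  | succ e _ ih => simpa [← add_mul] using ih.X_mul.add ih.one_sub_X_mul

theorem eval_nonneg (hp : HasNonnegBernsteinCoeffs d p) {x : ℝ} (hx : x ∈ Set.Icc 0 1) :
    0 ≤ p.eval x := by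
  obtain ⟨β, hβ, rfl⟩ := hp
  simp only [eval_finsetSum, eval_mul, eval_C]
  exact sum_nonneg fun k hk =>
    mul_nonneg (hβ k (by grind)) (bernsteinPolynomial.eval_nonneg d k hx)

theorem eval_pos (hp : HasNonnegBernsteinCoeffs d p) (hp0 : p ≠ 0) {x : ℝ}
    (hx : x ∈ Set.Ioo 0 1) : 0 < p.eval x := by
  obtain ⟨β, hβ, rfl⟩ := hp
  obtain ⟨k, hk, hβk⟩ : ∃ k ∈ range (d + 1), β k ≠ 0 := by
    contrapose! hp0
    exact sum_eq_zero fun k hk => by rw [hp0 k hk, C_0, zero_mul]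
  have hkd : k ≤ d := by grind
  simp only [eval_finsetSum, eval_mul, eval_C]
  refine sum_pos' (fun j hj => mul_nonneg (hβ j (by grind))
    (bernsteinPolynomial.eval_nonneg d j (Set.Ioo_subset_Icc_self hx))) ⟨k, hk, ?_⟩
  exact mul_pos ((hβ k hkd).lt_of_ne' hβk) (bernsteinPolynomial.eval_pos hkd hx)

theorem exists_coeffs_mem_Icc (hp : HasNonnegBernsteinCoeffs d p)
    (hq : HasNonnegBernsteinCoeffs d (1 - p)) :
    ∃ β : ℕ → ℝ, (∀ k ≤ d, 0 ≤ β k ∧ β k ≤ 1) ∧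
      p = ∑ k ∈ range (d + 1), C (β k) * bernsteinPolynomial ℝ d k := by
  obtain ⟨β, hβ, hpβ⟩ := hp
  obtain ⟨γ, hγ, hqγ⟩ := hq
  have hsum : ∀ k ≤ d, β k + γ k - 1 = 0 := by
    refine bernsteinPolynomial.eq_zero_of_sum_C_mul_eq_zero ?_
    simp only [C_sub, C_add, C_1, sub_mul, add_mul, one_mul, sum_sub_distrib, sum_add_distrib,
      bernsteinPolynomial.sum, ← hpβ, ← hqγ, add_sub_cancel, sub_self]
  exact ⟨β, fun k hk => ⟨hβ k hk, by linarith [hγ k hk, hsum k hk]⟩, hpβ⟩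

end HasNonnegBernsteinCoeffs

theorem exists_hasNonnegBernsteinCoeffs_of_forall_mem_Icc_pos {p : ℝ[X]}
    (hp : ∀ x ∈ Set.Icc (0 : ℝ) 1, 0 < p.eval x) : ∃ d, HasNonnegBernsteinCoeffs d p := by
  obtain ⟨x₀, hx₀, hmin⟩ := isCompact_Icc.exists_isMinOn (Set.nonempty_Icc.2 zero_le_one)
    p.continuous.continuousOn
  have hδ := hp x₀ hx₀
  set M := ∑ j ∈ range (p.natDegree + 1), |p.coeff j| * (j : ℝ) ^ 2
  obtain ⟨N, hN⟩ := exists_nat_gt (M / p.eval x₀)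
  set d := p.natDegree + (N + 1)
  refine ⟨d, bernsteinCoeff p d, fun k hk => ?_, (sum_C_bernsteinCoeff_mul (by omega)).symm⟩
  have happrox := abs_le.1 (abs_bernsteinCoeff_sub_eval_le (by omega : p.natDegree < d) hk)
  have hd : (0 : ℝ) < d := by positivity
  have hmin_le : p.eval x₀ ≤ p.eval ((k : ℝ) / d) :=
    hmin ⟨by positivity, div_le_one_of_le₀ (by exact_mod_cast hk) hd.le⟩
  have hM : M / (d - p.natDegree) < p.eval x₀ := by
    have hdn : (d : ℝ) - p.natDegree = N + 1 := by
      simp only [d]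
      push_cast
      ring
    rw [hdn, div_lt_iff₀ (by positivity)]
    rw [div_lt_iff₀ hδ] at hN
    linarith
  linarith

theorem exists_hasNonnegBernsteinCoeffs_of_forall_mem_Ioo_pos {p : ℝ[X]} (hp0 : p ≠ 0)
    (hp : ∀ x ∈ Set.Ioo (0 : ℝ) 1, 0 < p.eval x) : ∃ d, HasNonnegBernsteinCoeffs d p := by
  induction hn : p.natDegree using Nat.strong_induction_on generalizing p with
  | _ n ih =>
    by_cases h0 : p.eval 0 = 0
    · obtain ⟨q, rfl⟩ : X ∣ p := X_dvd_iff.2 (by rwa [coeff_zero_eq_eval_zero])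
      have hq0 : q ≠ 0 := by rintro rfl; simp at hp0
      have hq : ∀ x ∈ Set.Ioo (0 : ℝ) 1, 0 < q.eval x := fun x hx =>
        pos_of_mul_pos_right (by simpa using hp x hx) hx.1.le
      obtain ⟨d, hd⟩ := ih q.natDegree (by rw [← hn, natDegree_X_mul hq0]; omega) hq0 hq rfl
      exact ⟨d + 1, hd.X_mul⟩
    by_cases h1 : p.eval 1 = 0
    · obtain ⟨q, rfl⟩ : X - C 1 ∣ p := dvd_iff_isRoot.2 h1
      have hq0 : -q ≠ 0 := neg_ne_zero.2 (by rintro rfl; simp at hp0)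
      have hq : ∀ x ∈ Set.Ioo (0 : ℝ) 1, 0 < (-q).eval x := fun x hx =>
        pos_of_mul_pos_right (by simpa [← neg_mul] using hp x hx) (sub_nonneg.2 hx.2.le)
      obtain ⟨d, hd⟩ := ih (-q).natDegree (by
        rw [← hn, natDegree_mul (X_sub_C_ne_zero 1) (neg_ne_zero.1 hq0), natDegree_neg,
          natDegree_X_sub_C]; omega) hq0 hq rfl
      exact ⟨d + 1, by simpa [← neg_mul] using hd.one_sub_X_mul⟩
    have hnonneg : ∀ x ∈ Set.Icc (0 : ℝ) 1, 0 ≤ p.eval x := by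
      rw [← closure_Ioo zero_ne_one]
      exact closure_minimal (fun x hx => (hp x hx).le) (isClosed_le continuous_const p.continuous)
    refine exists_hasNonnegBernsteinCoeffs_of_forall_mem_Icc_pos fun x hx => ?_
    rcases Set.eq_endpoints_or_mem_Ioo_of_mem_Icc hx with rfl | rfl | hx'
    · exact (hnonneg 0 hx).lt_of_ne' h0
    · exact (hnonneg 1 hx).lt_of_ne' h1
    · exact hp x hx'

theorem bernstein_coeffs_in_unit_interval (p : Polynomial ℝ) :
    (∃ d : ℕ, p.natDegree ≤ d ∧ ∃ β : ℕ → ℝ,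
      (∀ k ≤ d, 0 ≤ β k ∧ β k ≤ 1) ∧
      p = ∑ k ∈ Finset.range (d + 1), Polynomial.C (β k) * bernsteinPolynomial ℝ d k)
    ↔ (p = 0 ∨ p = 1 ∨
        ((0 ≤ p.eval 0 ∧ p.eval 0 ≤ 1) ∧ (0 ≤ p.eval 1 ∧ p.eval 1 ≤ 1) ∧
          ∀ x ∈ Set.Ioo (0 : ℝ) 1, 0 < p.eval x ∧ p.eval x < 1)) := by
  constructor
  · rintro ⟨d, -, β, hβ, hpβ⟩
    have hp : HasNonnegBernsteinCoeffs d p := ⟨β, fun k hk => (hβ k hk).1, hpβ⟩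
    have hq : HasNonnegBernsteinCoeffs d (1 - p) :=
      hpβ ▸ hasNonnegBernsteinCoeffs_one_sub fun k hk => (hβ k hk).2
    have hIcc (x : ℝ) (hx : x ∈ Set.Icc 0 1) : 0 ≤ p.eval x ∧ p.eval x ≤ 1 :=
      ⟨hp.eval_nonneg hx, by simpa using hq.eval_nonneg hx⟩
    by_cases hp0 : p = 0
    · exact Or.inl hp0
    by_cases hp1 : p = 1
    · exact Or.inr (Or.inl hp1)
    have hq0 : 1 - p ≠ 0 := sub_ne_zero.2 (Ne.symm hp1)
    exact Or.inr (Or.inr ⟨hIcc 0 (by simp), hIcc 1 (by simp),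
      fun x hx => ⟨hp.eval_pos hp0 hx, by simpa using hq.eval_pos hq0 hx⟩⟩)
  · rintro (rfl | rfl | ⟨-, -, hmid⟩)
    · exact ⟨0, le_rfl, fun _ => 0, by simp, by simp⟩
    · exact ⟨0, by simp, fun _ => 1, by simp, by simp [bernsteinPolynomial]⟩
    have hp0 : p ≠ 0 := by rintro rfl; simpa using (hmid (1 / 2) (by norm_num)).1
    have hq0 : 1 - p ≠ 0 := fun h => by
      simpa [← sub_eq_zero.1 h] using (hmid (1 / 2) (by norm_num)).2
    obtain ⟨d₁, hd₁⟩ := exists_hasNonnegBernsteinCoeffs_of_forall_mem_Ioo_pos hp0 fun x hx =>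
      (hmid x hx).1
    obtain ⟨d₂, hd₂⟩ := exists_hasNonnegBernsteinCoeffs_of_forall_mem_Ioo_pos hq0 fun x hx => by
      simpa using (hmid x hx).2
    refine ⟨max (max d₁ d₂) p.natDegree, le_max_right _ _, ?_⟩
    exact (hd₁.mono (by omega)).exists_coeffs_mem_Icc (hd₂.mono (by omega))
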